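/- arXiv:2210.10583 — 3 statements merged into one kernel-verified Lean document; each statement's English description precedes it below -/
import Mathlib

section
/- Let X be a finite set of points (m_i, n_i) with m_i, n_i > 0, and let H be the lower-right convex hull of X. Then for any m, n ≥ 0, the maximum of (m + m_i)/(n + n_i) over points of X equals the maximum over points of H. -/
/-- `H` is a lower-right convex hull of the finite point set `X`:
`H ⊆ X`, and a point `q ∈ X` is *not* in `H` iff it is dominated by some
other point `r ∈ H` (`q.1 ≤ r.1` and `q.2 ≥ r.2`), or it lies on or above
the segment joining two points `p, r ∈ H`. Points are `(m, n)` pairs. -/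
def IsLowerRightHull (X H : Finset (ℝ × ℝ)) : Prop :=
  H ⊆ X ∧
  ∀ q ∈ X, q ∉ H ↔
    ((∃ r ∈ H, q ≠ r ∧ q.1 ≤ r.1 ∧ r.2 ≤ q.2) ∨
     (∃ p ∈ H, ∃ r ∈ H, p.1 < q.1 ∧ q.1 < r.1 ∧
        (q.2 - p.2) * (r.1 - p.1) ≥ (r.2 - p.2) * (q.1 - p.1)))

/-!
Every point of `X` outside `H` is either dominated by a point of `H`, which has a larger
numerator and a smaller denominator, or lies on or above a chord between two points of `H`.
In the second case, with `M ≥ 0` the maximum over `H`, the half-plane `m + x ≤ M (n + y)`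
contains both endpoints of the chord and is closed under moving upwards, so it contains `q`.
-/

lemma div_le_div_of_dominated {m n : ℝ} {q r : ℝ × ℝ} (hr₁ : 0 ≤ m + r.1) (hr₂ : 0 < n + r.2)
    (h₁ : q.1 ≤ r.1) (h₂ : r.2 ≤ q.2) :
    (m + q.1) / (n + q.2) ≤ (m + r.1) / (n + r.2) :=
  div_le_div₀ hr₁ (by linarith) hr₂ (by linarith)

lemma div_le_of_above_segment {m n M : ℝ} {p q r : ℝ × ℝ} (hM : 0 ≤ M)
    (hp : 0 < n + p.2) (hq : 0 < n + q.2) (hr : 0 < n + r.2)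
    (hpq : p.1 < q.1) (hqr : q.1 < r.1)
    (habove : (r.2 - p.2) * (q.1 - p.1) ≤ (q.2 - p.2) * (r.1 - p.1))
    (hpM : (m + p.1) / (n + p.2) ≤ M) (hrM : (m + r.1) / (n + r.2) ≤ M) :
    (m + q.1) / (n + q.2) ≤ M := by
  rw [div_le_iff₀ hp] at hpM
  rw [div_le_iff₀ hr] at hrM
  rw [div_le_iff₀ hq, ← sub_nonpos]
  -- `(x, y) ↦ m + x - M (n + y)` is affine, nonpositive at `p` and `r`, and nonincreasing in `y`
  have key : (m + q.1 - M * (n + q.2)) * (r.1 - p.1) =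
      (r.1 - q.1) * (m + p.1 - M * (n + p.2)) + (q.1 - p.1) * (m + r.1 - M * (n + r.2)) -
        M * ((q.2 - p.2) * (r.1 - p.1) - (r.2 - p.2) * (q.1 - p.1)) := by ring
  have hp' : (r.1 - q.1) * (m + p.1 - M * (n + p.2)) ≤ 0 :=
    mul_nonpos_of_nonneg_of_nonpos (by linarith) (by linarith)
  have hr' : (q.1 - p.1) * (m + r.1 - M * (n + r.2)) ≤ 0 :=
    mul_nonpos_of_nonneg_of_nonpos (by linarith) (by linarith)
  have habove' : 0 ≤ M * ((q.2 - p.2) * (r.1 - p.1) - (r.2 - p.2) * (q.1 - p.1)) :=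
    mul_nonneg hM (by linarith)
  exact nonpos_of_mul_nonpos_left (by linarith) (by linarith : 0 < r.1 - p.1)

theorem stmt0 (X H : Finset (ℝ × ℝ))
    (hpos : ∀ p ∈ X, 0 < p.1 ∧ 0 < p.2)
    (hhull : IsLowerRightHull X H)
    (hX : X.Nonempty) (hH : H.Nonempty)
    (m n : ℝ) (hm : 0 ≤ m) (hn : 0 ≤ n) :
    X.sup' hX (fun p => (m + p.1) / (n + p.2)) =
    H.sup' hH (fun p => (m + p.1) / (n + p.2)) := by
  obtain ⟨hHX, hnotin⟩ := hhull
  set f : ℝ × ℝ → ℝ := fun p => (m + p.1) / (n + p.2)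
  have hnum : ∀ p ∈ X, 0 ≤ m + p.1 := fun p hp => by linarith [(hpos p hp).1]
  have hden : ∀ p ∈ X, 0 < n + p.2 := fun p hp => by linarith [(hpos p hp).2]
  refine le_antisymm (Finset.sup'_le _ _ fun q hq => ?_) (Finset.sup'_mono f hHX hH)
  by_cases hqH : q ∈ H
  · exact Finset.le_sup' f hqH
  rcases (hnotin q hq).1 hqH with ⟨r, hr, -, hqr₁, hrq₂⟩ | ⟨p, hp, r, hr, hpq, hqr, habove⟩
  · exact (div_le_div_of_dominated (hnum r (hHX hr)) (hden r (hHX hr)) hqr₁ hrq₂).trans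
      (Finset.le_sup' f hr)
  · have hM : 0 ≤ H.sup' hH f :=
      (div_nonneg (hnum p (hHX hp)) (hden p (hHX hp)).le).trans (Finset.le_sup' f hp)
    exact div_le_of_above_segment hM (hden p (hHX hp)) (hden q hq) (hden r (hHX hr)) hpq hqr
      habove (Finset.le_sup' f hp) (Finset.le_sup' f hr)
end

section
/- Let p, q, r be points with positive coordinates satisfying n_p < n_q < n_r and m_p < m_q < m_r, and fix m, n ≥ 0. Define s(a,b) = (m_b − m_a)/(n_b − n_a) and b(a,b) = (m_b·n_a − m_a·n_b)/(n_b − n_a). If (m + m_q)/(n + n_q) ≥ (m + m_p)/(n + n_p) and (m + m_q)/(n + n_q) ≥ (m + m_r)/(n + n_r), then n·s(q,r) + b(q,r) ≤ m ≤ n·s(p,q) + b(p,q). -/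
/-! Cross-multiplying, `(m + mₐ)/(n + nₐ) ≤ (m + m_b)/(n + n_b)` becomes an inequality that is affine
in `m` (the `m * n` terms cancel), namely `m ≤ n * s(a,b) + b(a,b)`, where `n ↦ n * s(a,b) + b(a,b)`
is the line through the two points. Comparing `q` with `p` and with `r` gives the two bounds. -/

section Secant

variable {ma na mb nb m n : ℝ}

theorem div_le_div_iff_le_secant (ha : 0 < n + na) (hab : na < nb) :
    (m + ma) / (n + na) ≤ (m + mb) / (n + nb) ↔
      m ≤ n * ((mb - ma) / (nb - na)) + (mb * na - ma * nb) / (nb - na) := by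
  have hb : 0 < n + nb := by linarith
  rw [div_le_div_iff₀ ha hb,
    show n * ((mb - ma) / (nb - na)) + (mb * na - ma * nb) / (nb - na)
      = (n * (mb - ma) + (mb * na - ma * nb)) / (nb - na) by ring,
    le_div_iff₀ (sub_pos.mpr hab)]
  constructor <;> intro h <;> linarith

theorem div_le_div_iff_secant_le (ha : 0 < n + na) (hab : na < nb) :
    (m + mb) / (n + nb) ≤ (m + ma) / (n + na) ↔
      n * ((mb - ma) / (nb - na)) + (mb * na - ma * nb) / (nb - na) ≤ m := by
  have hb : 0 < n + nb := by linarith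
  rw [div_le_div_iff₀ hb ha,
    show n * ((mb - ma) / (nb - na)) + (mb * na - ma * nb) / (nb - na)
      = (n * (mb - ma) + (mb * na - ma * nb)) / (nb - na) by ring,
    div_le_iff₀ (sub_pos.mpr hab)]
  constructor <;> intro h <;> linarith

end Secant

theorem stmt2_general (mp np mq nq mr nr m n : ℝ)
    (hp' : 0 < np)
    (hn1 : np < nq) (hn2 : nq < nr)
    (hn : 0 ≤ n)
    (hoptp : (m + mp) / (n + np) ≤ (m + mq) / (n + nq))
    (hoptr : (m + mr) / (n + nr) ≤ (m + mq) / (n + nq)) :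
    n * ((mr - mq) / (nr - nq)) + (mr * nq - mq * nr) / (nr - nq) ≤ m ∧
    m ≤ n * ((mq - mp) / (nq - np)) + (mq * np - mp * nq) / (nq - np) := by
  have hnp : 0 < n + np := by linarith
  have hnq : 0 < n + nq := by linarith
  exact ⟨(div_le_div_iff_secant_le hnq hn2).mp hoptr,
    (div_le_div_iff_le_secant hnp hn1).mp hoptp⟩

theorem stmt2 (mp np mq nq mr nr m n : ℝ)
    (hp : 0 < mp) (hp' : 0 < np) (hq : 0 < mq) (hq' : 0 < nq)
    (hr : 0 < mr) (hr' : 0 < nr)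
    (hn1 : np < nq) (hn2 : nq < nr)
    (hm1 : mp < mq) (hm2 : mq < mr)
    (hm : 0 ≤ m) (hn : 0 ≤ n)
    (hoptp : (m + mp) / (n + np) ≤ (m + mq) / (n + nq))
    (hoptr : (m + mr) / (n + nr) ≤ (m + mq) / (n + nq)) :
    n * ((mr - mq) / (nr - nq)) + (mr * nq - mq * nr) / (nr - nq) ≤ m ∧
    m ≤ n * ((mq - mp) / (nq - np)) + (mq * np - mp * nq) / (nq - np) :=
  stmt2_general mp np mq nq mr nr m n hp' hn1 hn2 hn hoptp hoptr
end

section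
/- Let m, n ≥ 0 and let k = (m_k, n_k), p = (m_p, n_p), q = (m_q, n_q) be points with positive coordinates such that n_p < n_k < n_q, m_p < m_k < m_q, (n_q − n_k)/(m_q − m_k) ≤ (n_k − n_p)/(m_k − m_p), and (m + m_k)/(n + n_k) ≥ (m + m_p)/(n + n_p). Then (m + m_k)/(n + n_k) ≤ (m + m_q)/(n + n_q). -/
/-!
Put `P = (n + n_p, m + m_p)`, and `K`, `Q` likewise, so the objective at a point is the slope of
the ray from the origin to it. The objective grows from `P` to `K` exactly when the segment `PK`
is at least as steep as the ray `OK`; the slope hypothesis makes `KQ` at least as steep as `PK`,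
hence steeper than `OK`, so the objective grows again from `K` to `Q`. Cross-multiplied, each
comparison is the sign of a 2×2 determinant.
-/

section

variable {α : Type*} [Field α] [LinearOrder α] [IsStrictOrderedRing α] {x₁ x₂ y₁ y₂ : α}

theorem div_le_div_iff_sub_mul_le (hx₁ : 0 < x₁) (hx₂ : 0 < x₂) :
    y₁ / x₁ ≤ y₂ / x₂ ↔ (x₂ - x₁) * y₁ ≤ (y₂ - y₁) * x₁ := by
  rw [div_le_div_iff₀ hx₁ hx₂]
  constructor <;> intro h <;> linarith

theorem div_le_div_iff_sub_mul_le' (hx₁ : 0 < x₁) (hx₂ : 0 < x₂) :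
    y₁ / x₁ ≤ y₂ / x₂ ↔ (x₂ - x₁) * y₂ ≤ (y₂ - y₁) * x₂ := by
  rw [div_le_div_iff₀ hx₁ hx₂]
  constructor <;> intro h <;> linarith

/-- Transitivity of "at least as steep" for the directions `(x, y)`, `(b, a)`, `(d, c)`. -/
theorem mul_le_mul_of_steeper_trans {a b c d x y : α} (ha : 0 < a) (hc : 0 ≤ c) (hy : 0 ≤ y)
    (h₁ : b * y ≤ a * x) (h₂ : d * a ≤ b * c) : d * y ≤ c * x := by
  refine le_of_mul_le_mul_left ?_ ha
  calc a * (d * y) = (d * a) * y := by ring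
    _ ≤ (b * c) * y := mul_le_mul_of_nonneg_right h₂ hy
    _ = c * (b * y) := by ring
    _ ≤ c * (a * x) := mul_le_mul_of_nonneg_left h₁ hc
    _ = a * (c * x) := by ring

end

theorem stmt12_general (mk nk mp np mq nq m n : ℝ)
    (hnp : 0 < np) (hmk : 0 < mk) (hnk : 0 < nk)
    (hnq : 0 < nq)
    (hm : 0 ≤ m) (hn : 0 ≤ n)
    (hm1 : mp < mk) (hm2 : mk < mq)
    (hslope : (nq - nk) / (mq - mk) ≤ (nk - np) / (mk - mp))
    (hbeat : (m + mp) / (n + np) ≤ (m + mk) / (n + nk)) :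
    (m + mk) / (n + nk) ≤ (m + mq) / (n + nq) := by
  have hxk : 0 < n + nk := add_pos_of_nonneg_of_pos hn hnk
  have hpk := (div_le_div_iff_sub_mul_le' (add_pos_of_nonneg_of_pos hn hnp) hxk).1 hbeat
  rw [div_le_div_iff₀ (sub_pos.2 hm2) (sub_pos.2 hm1)] at hslope
  rw [div_le_div_iff_sub_mul_le hxk (add_pos_of_nonneg_of_pos hn hnq)]
  simp only [add_sub_add_left_eq_sub] at hpk ⊢
  exact mul_le_mul_of_steeper_trans (sub_pos.2 hm1) (sub_nonneg.2 hm2.le)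
    (add_nonneg hm hmk.le) hpk hslope

theorem stmt12 (mk nk mp np mq nq m n : ℝ)
    (hmp : 0 < mp) (hnp : 0 < np) (hmk : 0 < mk) (hnk : 0 < nk)
    (hmq : 0 < mq) (hnq : 0 < nq)
    (hm : 0 ≤ m) (hn : 0 ≤ n)
    (hn1 : np < nk) (hn2 : nk < nq)
    (hm1 : mp < mk) (hm2 : mk < mq)
    (hslope : (nq - nk) / (mq - mk) ≤ (nk - np) / (mk - mp))
    (hbeat : (m + mp) / (n + np) ≤ (m + mk) / (n + nk)) :
    (m + mk) / (n + nk) ≤ (m + mq) / (n + nq) :=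
  stmt12_general mk nk mp np mq nq m n hnp hmk hnk hnq hm hn hm1 hm2 hslope hbeat
end
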